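/- arXiv:1201.3026 — 8 statements merged into one kernel-verified Lean document; each statement's English description precedes it below -/
import Mathlib

section
/- Let H be a complex Hilbert space, H₁ and H₂ closed subspaces of H, and P₁, P₂ the orthogonal projections onto H₁ and H₂. Then the sum H₁ + H₂ is closed in H if and only if ‖P₁P₂ − P_{H₁∩H₂}‖ < 1, where P_{H₁∩H₂} is the orthogonal projection onto the closed subspace H₁ ∩ H₂. -/
/-!
Let `M = H₁ ⊓ H₂`, `A = H₁ ⊓ Mᗮ`, `B = H₂ ⊓ Mᗮ` and `T = P₁P₂ - P_M`. Then `H₁ ⊔ H₂ = A ⊔ H₂`,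
`(H₁ ⊔ H₂) ⊓ Mᗮ = A ⊔ B`, `⟪x, T y⟫ = ⟪x, y⟫` for `x ∈ A`, `y ∈ H₂`, and `T z = P₁ y` with
`y = P_{Mᗮ} P₂ z ∈ B`.

In a Banach space the sum of closed subspaces `U`, `V` is closed as soon as `c‖x‖ ≤ ‖x + y‖` on
`U × V` for some `c > 0`, since `(x, y) ↦ x + y` is then antilipschitz; conversely, if `U ⊓ V = ⊥`
and `U ⊔ V` is closed, the open mapping theorem provides such a `c`.

If `‖T‖ < 1`, the angle bound `‖⟪x, y⟫‖ ≤ ‖T‖‖x‖‖y‖` on `A × H₂` gives `(1 - ‖T‖)‖x‖ ≤ ‖x + y‖`,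
so `A ⊔ H₂` is closed. If `H₁ ⊔ H₂` is closed, so is `B ⊔ A`; the resulting bound
`c‖y‖ ≤ ‖y - P₁ y‖` on `B` and Pythagoras give `‖T z‖ = ‖P₁ y‖ ≤ √(1 - c²)‖z‖`.
-/

/-- The orthogonal projection of a Hilbert space `H` onto a complete (closed) subspace `K`,
viewed as a continuous linear operator `H →L[ℂ] H`. -/
noncomputable def proj {H : Type*} [NormedAddCommGroup H] [InnerProductSpace ℂ H]
    (K : Submodule ℂ H) [CompleteSpace K] : H →L[ℂ] H :=
  K.subtypeL.comp (K.orthogonalProjection)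

open scoped InnerProductSpace

namespace Submodule

section Banach

variable {𝕜 E : Type*} [NontriviallyNormedField 𝕜] [NormedAddCommGroup E] [NormedSpace 𝕜 E]
  {U V : Submodule 𝕜 E}

@[simp]
theorem subtypeL_coprod_subtypeL_apply (p : U × V) :
    U.subtypeL.coprod V.subtypeL p = (p.1 : E) + p.2 := rfl

theorem range_subtypeL_coprod_subtypeL (U V : Submodule 𝕜 E) :
    Set.range (U.subtypeL.coprod V.subtypeL) = ((U ⊔ V : Submodule 𝕜 E) : Set E) := by
  rw [← ContinuousLinearMap.coe_coe, ← LinearMap.coe_range, ContinuousLinearMap.range_coprod]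
  simp

variable [CompleteSpace E]

theorem isClosed_sup_of_mul_norm_le_norm_add (hU : IsClosed (U : Set E))
    (hV : IsClosed (V : Set E)) {c : ℝ} (hc : 0 < c)
    (h : ∀ x ∈ U, ∀ y ∈ V, c * ‖x‖ ≤ ‖x + y‖) : IsClosed ((U ⊔ V : Submodule 𝕜 E) : Set E) := by
  have : CompleteSpace U := hU.completeSpace_coe
  have : CompleteSpace V := hV.completeSpace_coe
  rw [← range_subtypeL_coprod_subtypeL]
  refine ((U.subtypeL.coprod V.subtypeL).antilipschitz_of_bound (K := (c⁻¹ + 1).toNNReal)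
    fun p ↦ ?_).isClosed_range (ContinuousLinearMap.uniformContinuous _)
  obtain ⟨⟨x, hx⟩, ⟨y, hy⟩⟩ := p
  have hxc : ‖x‖ ≤ c⁻¹ * ‖x + y‖ := by rw [le_inv_mul_iff₀ hc]; exact h x hx y hy
  have hyx : ‖y‖ ≤ ‖x + y‖ + ‖x‖ := by simpa using norm_sub_le (x + y) x
  change max ‖x‖ ‖y‖ ≤ (c⁻¹ + 1).toNNReal * ‖x + y‖
  rw [Real.coe_toNNReal _ (by positivity)]
  exact max_le (by nlinarith [norm_nonneg (x + y)]) (by nlinarith [norm_nonneg (x + y)])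

theorem exists_mul_norm_le_norm_add_of_isClosed_sup (hU : IsClosed (U : Set E))
    (hV : IsClosed (V : Set E)) (hUV : Disjoint U V)
    (h : IsClosed ((U ⊔ V : Submodule 𝕜 E) : Set E)) :
    ∃ c > 0, ∀ x ∈ U, ∀ y ∈ V, c * ‖x‖ ≤ ‖x + y‖ := by
  have : CompleteSpace U := hU.completeSpace_coe
  have : CompleteSpace V := hV.completeSpace_coe
  have hf : Function.Injective (U.subtypeL.coprod V.subtypeL) := by
    rw [← ContinuousLinearMap.coe_coe, ← LinearMap.ker_eq_bot,
      ContinuousLinearMap.ker_coprod_of_disjoint_range (by simpa using hUV)]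
    simp
  obtain ⟨K, hK⟩ := (U.subtypeL.coprod V.subtypeL).antilipschitz_of_injective_of_isClosed_range hf
    (by rwa [range_subtypeL_coprod_subtypeL])
  refine ⟨((K : ℝ) + 1)⁻¹, by positivity, fun x hx y hy ↦ ?_⟩
  have hbound : max ‖x‖ ‖y‖ ≤ K * ‖x + y‖ :=
    (U.subtypeL.coprod V.subtypeL).bound_of_antilipschitz hK (⟨x, hx⟩, ⟨y, hy⟩)
  rw [inv_mul_le_iff₀ (by positivity)]
  nlinarith [norm_nonneg (x + y), le_max_left ‖x‖ ‖y‖]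

end Banach

section InnerProduct

variable {𝕜 E : Type*} [RCLike 𝕜] [NormedAddCommGroup E] [InnerProductSpace 𝕜 E]

theorem mul_norm_le_norm_add_of_norm_inner_le {x y : E} {c : ℝ} (hc : 0 ≤ c)
    (h : ‖⟪x, y⟫_𝕜‖ ≤ c * (‖x‖ * ‖y‖)) : (1 - c) * ‖x‖ ≤ ‖x + y‖ := by
  rcases le_total 1 c with hc1 | hc1
  · nlinarith [norm_nonneg x, norm_nonneg (x + y)]
  have hre : -(c * (‖x‖ * ‖y‖)) ≤ RCLike.re ⟪x, y⟫_𝕜 :=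
    (neg_le_neg_iff.2 h).trans (neg_le_of_abs_le (RCLike.abs_re_le_norm _))
  refine (pow_le_pow_iff_left₀ (by positivity) (norm_nonneg _) two_ne_zero).1 ?_
  rw [@norm_add_sq 𝕜]
  -- `‖x + y‖² - ((1 - c)‖x‖)² ≥ (‖y‖ - c‖x‖)² + 2c(1 - c)‖x‖²`
  nlinarith [sq_nonneg (‖y‖ - c * ‖x‖), mul_nonneg (mul_nonneg hc (sub_nonneg.2 hc1))
    (sq_nonneg ‖x‖)]

theorem norm_starProjection_le_sqrt_mul_norm (K : Submodule 𝕜 E) [K.HasOrthogonalProjection]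
    {y : E} {c : ℝ} (hc0 : 0 ≤ c) (hc1 : c ≤ 1) (h : c * ‖y‖ ≤ ‖y - K.starProjection y‖) :
    ‖K.starProjection y‖ ≤ √(1 - c ^ 2) * ‖y‖ := by
  have hpyth := K.norm_sq_eq_add_norm_sq_starProjection y
  rw [starProjection_orthogonal, sub_apply, ContinuousLinearMap.id_apply] at hpyth
  have hsq : (c * ‖y‖) ^ 2 ≤ ‖y - K.starProjection y‖ ^ 2 := by gcongr
  rw [← Real.sqrt_sq (norm_nonneg y), ← Real.sqrt_mul (by nlinarith),
    Real.le_sqrt (norm_nonneg _) (by nlinarith)]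
  nlinarith

theorem isClosed_of_hasOrthogonalProjection (K : Submodule 𝕜 E) [K.HasOrthogonalProjection] :
    IsClosed (K : Set E) :=
  K.orthogonal_orthogonal ▸ Kᗮ.isClosed_orthogonal

theorem starProjection_mem_orthogonal {K M : Submodule 𝕜 E} [K.HasOrthogonalProjection]
    [M.HasOrthogonalProjection] (hMK : M ≤ K) {y : E} (hy : y ∈ Mᗮ) :
    K.starProjection y ∈ Mᗮ := by
  rw [← starProjection_apply_eq_zero_iff] at hy ⊢
  rw [← ContinuousLinearMap.comp_apply, starProjection_comp_starProjection_of_le hMK, hy]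

theorem sup_eq_inf_orthogonal_inf_sup (K₁ K₂ : Submodule 𝕜 E)
    [(K₁ ⊓ K₂).HasOrthogonalProjection] : K₁ ⊔ K₂ = K₁ ⊓ (K₁ ⊓ K₂)ᗮ ⊔ K₂ := by
  conv_lhs => rw [← sup_orthogonal_inf_of_hasOrthogonalProjection (inf_le_left : K₁ ⊓ K₂ ≤ K₁)]
  rw [sup_comm (K₁ ⊓ K₂), sup_assoc, sup_eq_right.2 (inf_le_right : K₁ ⊓ K₂ ≤ K₂), inf_comm]

theorem sup_inf_orthogonal_inf (K₁ K₂ : Submodule 𝕜 E) [(K₁ ⊓ K₂).HasOrthogonalProjection] :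
    (K₁ ⊔ K₂) ⊓ (K₁ ⊓ K₂)ᗮ = K₁ ⊓ (K₁ ⊓ K₂)ᗮ ⊔ K₂ ⊓ (K₁ ⊓ K₂)ᗮ := by
  rw [sup_eq_inf_orthogonal_inf_sup, sup_inf_assoc_of_le _ inf_le_right]

theorem inner_mul_sub_starProjection_inf_apply {K₁ K₂ : Submodule 𝕜 E} [K₁.HasOrthogonalProjection]
    [K₂.HasOrthogonalProjection] [(K₁ ⊓ K₂).HasOrthogonalProjection] {x y : E}
    (hx : x ∈ K₁ ⊓ (K₁ ⊓ K₂)ᗮ) (hy : y ∈ K₂) :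
    ⟪x, (K₁.starProjection * K₂.starProjection - (K₁ ⊓ K₂).starProjection) y⟫_𝕜 = ⟪x, y⟫_𝕜 := by
  rw [sub_apply, mul_apply_eq_comp, starProjection_eq_self_iff.2 hy, inner_sub_right,
    ← inner_starProjection_left_eq_right, ← inner_starProjection_left_eq_right,
    starProjection_eq_self_iff.2 hx.1, (starProjection_apply_eq_zero_iff _).2 hx.2, inner_zero_left,
    sub_zero]

theorem mul_sub_starProjection_inf_apply {K₁ K₂ : Submodule 𝕜 E} [K₁.HasOrthogonalProjection]
    [K₂.HasOrthogonalProjection] [(K₁ ⊓ K₂).HasOrthogonalProjection] (z : E) :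
    (K₁.starProjection * K₂.starProjection - (K₁ ⊓ K₂).starProjection) z =
      K₁.starProjection ((K₁ ⊓ K₂)ᗮ.starProjection (K₂.starProjection z)) := by
  rw [starProjection_orthogonal, sub_apply, sub_apply, ContinuousLinearMap.id_apply,
    map_sub, mul_apply_eq_comp, ← ContinuousLinearMap.comp_apply (K₁ ⊓ K₂).starProjection,
    starProjection_comp_starProjection_of_le inf_le_right,
    starProjection_eq_self_iff.2 (starProjection_apply_mem (K₁ ⊓ K₂) z).1]

variable [CompleteSpace E]

theorem isClosed_sup_of_norm_mul_sub_starProjection_inf_lt_one {K₁ K₂ : Submodule 𝕜 E}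
    [K₁.HasOrthogonalProjection] [K₂.HasOrthogonalProjection] [(K₁ ⊓ K₂).HasOrthogonalProjection]
    (h : ‖K₁.starProjection * K₂.starProjection - (K₁ ⊓ K₂).starProjection‖ < 1) :
    IsClosed ((K₁ ⊔ K₂ : Submodule 𝕜 E) : Set E) := by
  set T := K₁.starProjection * K₂.starProjection - (K₁ ⊓ K₂).starProjection
  have hangle : ∀ x ∈ K₁ ⊓ (K₁ ⊓ K₂)ᗮ, ∀ y ∈ K₂, ‖⟪x, y⟫_𝕜‖ ≤ ‖T‖ * (‖x‖ * ‖y‖) := by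
    intro x hx y hy
    calc ‖⟪x, y⟫_𝕜‖ = ‖⟪x, T y⟫_𝕜‖ := by rw [inner_mul_sub_starProjection_inf_apply hx hy]
      _ ≤ ‖x‖ * (‖T‖ * ‖y‖) := (norm_inner_le_norm x _).trans (by gcongr; exact T.le_opNorm y)
      _ = ‖T‖ * (‖x‖ * ‖y‖) := by ring
  rw [sup_eq_inf_orthogonal_inf_sup]
  exact isClosed_sup_of_mul_norm_le_norm_add
    ((isClosed_of_hasOrthogonalProjection K₁).inter (K₁ ⊓ K₂).isClosed_orthogonal)
    (isClosed_of_hasOrthogonalProjection K₂) (sub_pos.2 h)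
    fun x hx y hy ↦ mul_norm_le_norm_add_of_norm_inner_le (norm_nonneg T) (hangle x hx y hy)

theorem norm_mul_sub_starProjection_inf_lt_one_of_isClosed_sup {K₁ K₂ : Submodule 𝕜 E}
    [K₁.HasOrthogonalProjection] [K₂.HasOrthogonalProjection] [(K₁ ⊓ K₂).HasOrthogonalProjection]
    (h : IsClosed ((K₁ ⊔ K₂ : Submodule 𝕜 E) : Set E)) :
    ‖K₁.starProjection * K₂.starProjection - (K₁ ⊓ K₂).starProjection‖ < 1 := by
  set M := K₁ ⊓ K₂
  have hA : IsClosed ((K₁ ⊓ Mᗮ : Submodule 𝕜 E) : Set E) :=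
    (isClosed_of_hasOrthogonalProjection K₁).inter M.isClosed_orthogonal
  have hB : IsClosed ((K₂ ⊓ Mᗮ : Submodule 𝕜 E) : Set E) :=
    (isClosed_of_hasOrthogonalProjection K₂).inter M.isClosed_orthogonal
  have hBA : Disjoint (K₂ ⊓ Mᗮ) (K₁ ⊓ Mᗮ) := by
    rw [disjoint_iff_inf_le, ← M.inf_orthogonal_eq_bot]
    exact fun x hx ↦ ⟨⟨hx.2.1, hx.1.1⟩, hx.1.2⟩
  obtain ⟨c, hc, hcB⟩ := exists_mul_norm_le_norm_add_of_isClosed_sup hB hA hBA (by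
    rw [sup_comm, ← sup_inf_orthogonal_inf]; exact h.inter M.isClosed_orthogonal)
  set s := min c 1
  have hs : 0 < s := lt_min hc one_pos
  refine ((ContinuousLinearMap.opNorm_le_bound _ (Real.sqrt_nonneg (1 - s ^ 2)) fun z ↦ ?_).trans_lt
    ((Real.sqrt_lt' one_pos).2 (by nlinarith)))
  set y := Mᗮ.starProjection (K₂.starProjection z)
  have hyB : y ∈ K₂ ⊓ Mᗮ := by
    refine ⟨?_, starProjection_apply_mem _ _⟩
    -- `P_{Mᗮ}` preserves `K₂ = K₂ᗮᗮ` because `K₂ᗮ ≤ Mᗮ`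
    rw [← K₂.orthogonal_orthogonal]
    exact starProjection_mem_orthogonal (orthogonal_le inf_le_right)
      (K₂.orthogonal_orthogonal.symm ▸ starProjection_apply_mem K₂ z)
  have hxA : -K₁.starProjection y ∈ K₁ ⊓ Mᗮ :=
    neg_mem ⟨starProjection_apply_mem K₁ y, starProjection_mem_orthogonal inf_le_left hyB.2⟩
  have hyz : ‖y‖ ≤ ‖z‖ :=
    (norm_starProjection_apply_le _ _).trans (norm_starProjection_apply_le _ _)
  rw [mul_sub_starProjection_inf_apply]
  refine (K₁.norm_starProjection_le_sqrt_mul_norm hs.le (min_le_right c 1) ?_).trans (by gcongr)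
  calc s * ‖y‖ ≤ c * ‖y‖ := by gcongr; exact min_le_left c 1
    _ ≤ ‖y - K₁.starProjection y‖ := by simpa [sub_eq_add_neg] using hcB y hyB _ hxA

theorem isClosed_sup_iff_norm_mul_sub_starProjection_inf_lt_one {K₁ K₂ : Submodule 𝕜 E}
    [K₁.HasOrthogonalProjection] [K₂.HasOrthogonalProjection] [(K₁ ⊓ K₂).HasOrthogonalProjection] :
    IsClosed ((K₁ ⊔ K₂ : Submodule 𝕜 E) : Set E) ↔
      ‖K₁.starProjection * K₂.starProjection - (K₁ ⊓ K₂).starProjection‖ < 1 :=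
  ⟨norm_mul_sub_starProjection_inf_lt_one_of_isClosed_sup,
    isClosed_sup_of_norm_mul_sub_starProjection_inf_lt_one⟩

end InnerProduct

end Submodule

theorem proj_eq_starProjection {H : Type*} [NormedAddCommGroup H] [InnerProductSpace ℂ H]
    (K : Submodule ℂ H) [CompleteSpace K] : proj K = K.starProjection :=
  rfl

/-- `H₁ + H₂` is closed iff `‖P₁P₂ − P_{H₁ ∩ H₂}‖ < 1`. -/
theorem stmt1 {H : Type*} [NormedAddCommGroup H] [InnerProductSpace ℂ H] [CompleteSpace H]
    (H₁ H₂ : Submodule ℂ H) [CompleteSpace H₁] [CompleteSpace H₂]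
    [CompleteSpace ↥(H₁ ⊓ H₂)] :
    IsClosed ((H₁ ⊔ H₂ : Submodule ℂ H) : Set H) ↔
      ‖proj H₁ * proj H₂ - proj (H₁ ⊓ H₂)‖ < 1 := by
  simp only [proj_eq_starProjection]
  exact Submodule.isClosed_sup_iff_norm_mul_sub_starProjection_inf_lt_one
end

section
/- Let H be a complex Hilbert space and H₁, H₂ closed subspaces of H. Then H₁ + H₂ is closed in H if and only if H₁⊥ + H₂⊥ is closed in H, where K⊥ denotes the orthogonal complement of a subspace K. -/
open scoped InnerProductSpace

/-!
If `M ⊔ N` is closed, the addition map `M × N → M ⊔ N` is a surjection of Banach spaces, hence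
open. So for `w ⊥ M ⊓ N` the functional `x + y ↦ ⟪w, x⟫` is well defined and bounded on `M ⊔ N`;
its Riesz representative `u` gives `w = (w - u) + u ∈ Mᗮ ⊔ Nᗮ`. Thus `Mᗮ ⊔ Nᗮ = (M ⊓ N)ᗮ` is
closed, and the converse follows by applying this to `Mᗮ, Nᗮ`.
-/

theorem ContinuousLinearMap.exists_comp_eq_of_forall_eq_zero {𝕜 E F G : Type*}
    [NontriviallyNormedField 𝕜]
    [NormedAddCommGroup E] [NormedSpace 𝕜 E] [CompleteSpace E]
    [NormedAddCommGroup F] [NormedSpace 𝕜 F] [CompleteSpace F]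
    [NormedAddCommGroup G] [NormedSpace 𝕜 G]
    (T : E →L[𝕜] F) (hT : Function.Surjective T) (φ : E →L[𝕜] G)
    (h : ∀ x, T x = 0 → φ x = 0) :
    ∃ ψ : F →L[𝕜] G, ψ.comp T = φ := by
  let ψ : F →ₗ[𝕜] G := (LinearMap.ker (T : E →ₗ[𝕜] F)).liftQ φ h ∘ₗ
    ((T : E →ₗ[𝕜] F).quotKerEquivOfSurjective hT).symm
  have hψT : ⇑ψ ∘ ⇑T = ⇑φ := funext fun x => by
    simp only [ψ, Function.comp_apply, LinearMap.comp_apply]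
    exact congrArg _ ((T : E →ₗ[𝕜] F).quotKerEquivOfSurjective_symm_apply hT x)
  have hψ : Continuous ψ := by
    rw [(T.isQuotientMap hT).continuous_iff, hψT]
    exact φ.continuous
  exact ⟨⟨ψ, hψ⟩, ContinuousLinearMap.ext (congrFun hψT)⟩

section

variable {R E : Type*} [Semiring R] [TopologicalSpace E] [AddCommMonoid E] [Module R E]
  [ContinuousAdd E]

def Submodule.supAddL (M N : Submodule R E) : M × N →L[R] (M ⊔ N : Submodule R E) :=
  (M.subtypeL.coprod N.subtypeL).codRestrict _ fun p => Submodule.add_mem_sup p.1.2 p.2.2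

@[simp]
theorem Submodule.coe_supAddL_apply (M N : Submodule R E) (p : M × N) :
    (M.supAddL N p : E) = p.1 + p.2 := rfl

theorem Submodule.supAddL_surjective (M N : Submodule R E) :
    Function.Surjective (M.supAddL N) := by
  rintro ⟨z, hz⟩
  obtain ⟨x, hx, y, hy, rfl⟩ := Submodule.mem_sup.mp hz
  exact ⟨(⟨x, hx⟩, ⟨y, hy⟩), rfl⟩

end

section

variable {𝕜 E : Type*} [RCLike 𝕜] [NormedAddCommGroup E] [InnerProductSpace 𝕜 E] [CompleteSpace E]

theorem Submodule.orthogonal_inf_le_sup_orthogonal {M N : Submodule 𝕜 E}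
    (hM : IsClosed (M : Set E)) (hN : IsClosed (N : Set E))
    (hMN : IsClosed ((M ⊔ N : Submodule 𝕜 E) : Set E)) : (M ⊓ N)ᗮ ≤ Mᗮ ⊔ Nᗮ := by
  intro w hw
  have := hM.completeSpace_coe
  have := hN.completeSpace_coe
  have := hMN.completeSpace_coe
  obtain ⟨ψ, hψ⟩ := (M.supAddL N).exists_comp_eq_of_forall_eq_zero (M.supAddL_surjective N)
    ((innerSL 𝕜 w).comp (M.subtypeL.comp (ContinuousLinearMap.fst 𝕜 M N))) fun p hp => by
      have hpN : (p.1 : E) ∈ N := by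
        have hp' : (p.1 : E) + p.2 = 0 := by simpa using congrArg Subtype.val hp
        rw [eq_neg_of_add_eq_zero_left hp']
        exact N.neg_mem p.2.2
      exact ((M ⊓ N).mem_orthogonal' w).mp hw _ ⟨p.1.2, hpN⟩
  set u : (M ⊔ N : Submodule 𝕜 E) := (InnerProductSpace.toDual 𝕜 (M ⊔ N : Submodule 𝕜 E)).symm ψ
  have hu : ∀ p : M × N, ⟪(u : E), p.1 + p.2⟫_𝕜 = ⟪w, p.1⟫_𝕜 := fun p => by
    rw [← M.coe_supAddL_apply N, ← Submodule.coe_inner, InnerProductSpace.toDual_symm_apply,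
      ← ContinuousLinearMap.comp_apply, hψ]
    rfl
  have huN : (u : E) ∈ Nᗮ := (N.mem_orthogonal' _).mpr fun y hy => by
    simpa using hu (0, ⟨y, hy⟩)
  have hwuM : w - u ∈ Mᗮ := (M.mem_orthogonal' _).mpr fun x hx => by
    simpa [inner_sub_left, sub_eq_zero] using (hu (⟨x, hx⟩, 0)).symm
  simpa using Submodule.add_mem_sup hwuM huN

theorem Submodule.sup_orthogonal_eq_orthogonal_inf {M N : Submodule 𝕜 E}
    (hM : IsClosed (M : Set E)) (hN : IsClosed (N : Set E))
    (hMN : IsClosed ((M ⊔ N : Submodule 𝕜 E) : Set E)) : Mᗮ ⊔ Nᗮ = (M ⊓ N)ᗮ :=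
  le_antisymm (sup_le (orthogonal_le inf_le_left) (orthogonal_le inf_le_right))
    (orthogonal_inf_le_sup_orthogonal hM hN hMN)

theorem Submodule.isClosed_sup_orthogonal {M N : Submodule 𝕜 E}
    (hM : IsClosed (M : Set E)) (hN : IsClosed (N : Set E))
    (hMN : IsClosed ((M ⊔ N : Submodule 𝕜 E) : Set E)) :
    IsClosed ((Mᗮ ⊔ Nᗮ : Submodule 𝕜 E) : Set E) :=
  sup_orthogonal_eq_orthogonal_inf hM hN hMN ▸ isClosed_orthogonal _

end

/-- `H₁ + H₂` is closed iff `H₁⊥ + H₂⊥` is closed. -/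
theorem stmt2 {H : Type*} [NormedAddCommGroup H] [InnerProductSpace ℂ H] [CompleteSpace H]
    (H₁ H₂ : Submodule ℂ H) (h₁ : IsClosed (H₁ : Set H)) (h₂ : IsClosed (H₂ : Set H)) :
    IsClosed ((H₁ ⊔ H₂ : Submodule ℂ H) : Set H) ↔
      IsClosed ((H₁ᗮ ⊔ H₂ᗮ : Submodule ℂ H) : Set H) := by
  refine ⟨Submodule.isClosed_sup_orthogonal h₁ h₂, fun h => ?_⟩
  have := h₁.completeSpace_coe
  have := h₂.completeSpace_coe
  simpa only [Submodule.orthogonal_orthogonal] using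
    Submodule.isClosed_sup_orthogonal H₁.isClosed_orthogonal H₂.isClosed_orthogonal h
end

section
/- Let H be a complex Hilbert space, H₁ and H₂ closed subspaces of H, and P₁, P₂ the orthogonal projections onto H₁ and H₂. Then H₁ + H₂ is closed in H if and only if the range of the operator I − P₁P₂ is closed in H. -/
namespace ContinuousLinearMap

open Submodule

theorem IsIdempotentElem.isClosed_sup_ker_iff_isClosed_map {R M : Type*} [Ring R]
    [TopologicalSpace M] [AddCommGroup M] [Module R M] [IsTopologicalAddGroup M] [T1Space M]
    {P : M →L[R] M} (hP : IsIdempotentElem P) (W : Submodule R M) :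
    IsClosed ((W ⊔ P.ker : Submodule R M) : Set M) ↔
      IsClosed ((W.map P.toLinearMap : Submodule R M) : Set M) := by
  have hfix : ∀ y ∈ P.range, P y = y := fun _ ↦
    (LinearMap.IsIdempotentElem.mem_range_iff (IsIdempotentElem.toLinearMap hP)).1
  have hmap : ((W.map P.toLinearMap : Submodule R M) : Set M) =
      ((W.map P.toLinearMap).comap P.toLinearMap : Set M) ∩ P.range := by
    ext y
    refine ⟨fun hy ↦ ?_, fun ⟨hPy, hy⟩ ↦ hfix y hy ▸ hPy⟩
    have hyr : y ∈ P.range := LinearMap.map_le_range hy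
    exact ⟨show P y ∈ _ from (hfix y hyr).symm ▸ hy, hyr⟩
  rw [← comap_map_eq]
  exact ⟨fun h ↦ hmap ▸ h.inter (IsIdempotentElem.isClosed_range hP),
    fun h ↦ h.preimage P.continuous⟩

variable {𝕜 E F : Type*} [RCLike 𝕜] [NormedAddCommGroup E] [InnerProductSpace 𝕜 E]
  [CompleteSpace E]

theorem range_comp_subtypeL_orthogonal_ker [NormedAddCommGroup F] [NormedSpace 𝕜 F]
    (T : E →L[𝕜] F) : (T ∘L T.kerᗮ.subtypeL).range = T.range := by
  refine le_antisymm (LinearMap.range_comp_le_range _ _) ?_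
  rintro _ ⟨x, rfl⟩
  refine ⟨T.kerᗮ.orthogonalProjectionOnto x, ?_⟩
  have hker : T (T.ker.starProjection x) = 0 := T.ker.starProjection_apply_mem x
  calc T (T.kerᗮ.starProjection x)
      = T (T.ker.starProjection x + T.kerᗮ.starProjection x) := by rw [map_add, hker, zero_add]
    _ = T x := by rw [starProjection_add_starProjection_orthogonal]

theorem isClosed_range_iff_exists_antilipschitz [NormedAddCommGroup F] [NormedSpace 𝕜 F]
    [CompleteSpace F] (T : E →L[𝕜] F) :
    IsClosed (Set.range T) ↔ ∃ C, AntilipschitzWith C (T ∘L T.kerᗮ.subtypeL) := by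
  have hinj : Function.Injective (T ∘L T.kerᗮ.subtypeL) := by
    refine (injective_iff_map_eq_zero _).2 fun x hTx ↦ Subtype.ext ?_
    exact T.ker.inf_orthogonal_eq_bot.le ⟨hTx, x.2⟩
  have hrange : Set.range (T ∘L T.kerᗮ.subtypeL) = Set.range T := by
    simpa only [LinearMap.coe_range, ContinuousLinearMap.coe_coe] using
      congrArg (fun S : Submodule 𝕜 F ↦ (S : Set F)) (range_comp_subtypeL_orthogonal_ker T)
  rw [← isClosed_range_iff_antilipschitz_of_injective _ hinj, hrange]

variable [NormedAddCommGroup F] [InnerProductSpace 𝕜 F] [CompleteSpace F]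

theorem exists_antilipschitz_comp_subtypeL_iff_adjoint_comp_self (T : E →L[𝕜] F)
    (K : Submodule 𝕜 E) :
    (∃ C, AntilipschitzWith C (T ∘L K.subtypeL)) ↔
      ∃ C, AntilipschitzWith C (adjoint T ∘L T ∘L K.subtypeL) := by
  constructor
  · rintro ⟨C, hC⟩
    refine ⟨C * C, antilipschitz_of_bound _ fun x ↦ ?_⟩
    have hx : ‖x‖ ≤ C * ‖T x‖ := hC.le_mul_norm (map_zero _) x
    have hsq : ‖T x‖ ^ 2 ≤ ‖(adjoint T ∘L T) x‖ * ‖x‖ := by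
      rw [apply_norm_sq_eq_inner_adjoint_left]
      exact (RCLike.re_le_norm _).trans (norm_inner_le_norm _ _)
    have hTx : ‖T x‖ ≤ C * ‖(adjoint T ∘L T) x‖ := by
      rcases (norm_nonneg (T x)).eq_or_lt with h0 | hpos
      · rw [← h0]
        positivity
      refine le_of_mul_le_mul_left ?_ hpos
      calc ‖T x‖ * ‖T x‖ = ‖T x‖ ^ 2 := (sq _).symm
        _ ≤ ‖(adjoint T ∘L T) x‖ * ‖x‖ := hsq
        _ ≤ ‖(adjoint T ∘L T) x‖ * (C * ‖T x‖) := by gcongr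
        _ = ‖T x‖ * (C * ‖(adjoint T ∘L T) x‖) := by ring
    calc ‖x‖ ≤ C * ‖T x‖ := hx
      _ ≤ C * (C * ‖(adjoint T ∘L T) x‖) := by gcongr
      _ = ((C * C : NNReal) : ℝ) * ‖(adjoint T ∘L T) x‖ := by push_cast; ring
  · rintro ⟨C, hC⟩
    refine ⟨C * ‖adjoint T‖₊, antilipschitz_of_bound _ fun x ↦ ?_⟩
    calc ‖x‖ ≤ C * ‖adjoint T (T x)‖ := hC.le_mul_norm (map_zero _) x
      _ ≤ C * (‖adjoint T‖ * ‖T x‖) := by gcongr; exact le_opNorm _ _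
      _ = ((C * ‖adjoint T‖₊ : NNReal) : ℝ) * ‖T x‖ := by push_cast; ring

theorem isClosed_range_adjoint_comp_self_iff (T : E →L[𝕜] F) :
    IsClosed (Set.range (adjoint T ∘L T)) ↔ IsClosed (Set.range T) := by
  rw [isClosed_range_iff_exists_antilipschitz, isClosed_range_iff_exists_antilipschitz,
    ker_adjoint_comp_self]
  exact (exists_antilipschitz_comp_subtypeL_iff_adjoint_comp_self T _).symm

end ContinuousLinearMap

namespace Submodule

open ContinuousLinearMap

variable {𝕜 E : Type*} [RCLike 𝕜] [NormedAddCommGroup E] [InnerProductSpace 𝕜 E]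
  (V W : Submodule 𝕜 E) [V.HasOrthogonalProjection]

theorem isClosed_sup_orthogonal_iff_isClosed_map_starProjection :
    IsClosed ((W ⊔ Vᗮ : Submodule 𝕜 E) : Set E) ↔
      IsClosed ((W.map V.starProjection.toLinearMap : Submodule 𝕜 E) : Set E) := by
  rw [← ker_starProjection V]
  exact V.isIdempotentElem_starProjection.isClosed_sup_ker_iff_isClosed_map W

theorem range_starProjection_comp_starProjection [W.HasOrthogonalProjection] :
    (V.starProjection ∘L W.starProjection).range = W.map V.starProjection.toLinearMap := by
  rw [toLinearMap_comp, LinearMap.range_comp, range_starProjection]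

theorem adjoint_comp_self_starProjection_comp_starProjection [W.HasOrthogonalProjection]
    [CompleteSpace E] :
    adjoint (V.starProjection ∘L W.starProjection) ∘L (V.starProjection ∘L W.starProjection) =
      W.starProjection ∘L V.starProjection ∘L W.starProjection := by
  rw [adjoint_comp, (isSelfAdjoint_starProjection V).adjoint_eq,
    (isSelfAdjoint_starProjection W).adjoint_eq]
  ext x
  simp only [coe_comp, Function.comp_apply,
    starProjection_eq_self_iff.2 (V.starProjection_apply_mem _)]

theorem range_one_sub_starProjection_mul_starProjection [W.HasOrthogonalProjection] :
    (1 - V.starProjection * W.starProjection).range =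
      W.map Vᗮ.starProjection.toLinearMap ⊔ Wᗮ := by
  have hsplit : ∀ x, (1 - V.starProjection * W.starProjection) x =
      Vᗮ.starProjection (W.starProjection x) + (x - W.starProjection x) := fun x ↦ by
    simp only [starProjection_orthogonal', sub_apply, one_apply_eq_self, mul_apply_eq_comp]
    abel
  ext y
  constructor
  · rintro ⟨x, rfl⟩
    rw [ContinuousLinearMap.coe_coe, hsplit]
    exact add_mem (mem_sup_left ⟨_, W.starProjection_apply_mem x, rfl⟩)
      (mem_sup_right (W.sub_starProjection_mem_orthogonal x))
  · intro hy
    obtain ⟨_, ⟨w, hw, rfl⟩, z, hz, rfl⟩ := mem_sup.1 hy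
    refine ⟨w + z, ?_⟩
    rw [ContinuousLinearMap.coe_coe, hsplit, map_add, starProjection_eq_self_iff.2 hw,
      (starProjection_apply_eq_zero_iff W).2 hz, add_zero, add_sub_cancel_left]
    rfl

end Submodule

/-- `H₁ + H₂` is closed iff the range of `I − P₁P₂` is closed. -/
theorem stmt3 {H : Type*} [NormedAddCommGroup H] [InnerProductSpace ℂ H] [CompleteSpace H]
    (H₁ H₂ : Submodule ℂ H) [CompleteSpace H₁] [CompleteSpace H₂] :
    IsClosed ((H₁ ⊔ H₂ : Submodule ℂ H) : Set H) ↔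
      IsClosed (Set.range ⇑((1 : H →L[ℂ] H) - proj H₁ * proj H₂)) := by
  change _ ↔ IsClosed (Set.range ⇑(1 - H₁.starProjection * H₂.starProjection))
  set T := H₁ᗮ.starProjection ∘L H₂.starProjection with hT
  set U := H₂.map H₁ᗮ.starProjection.toLinearMap with hU
  open ContinuousLinearMap Submodule in
  calc IsClosed ((H₁ ⊔ H₂ : Submodule ℂ H) : Set H)
      ↔ IsClosed (U : Set H) := by
        simpa only [orthogonal_orthogonal, sup_comm] using
          H₁ᗮ.isClosed_sup_orthogonal_iff_isClosed_map_starProjection H₂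
    _ ↔ IsClosed (Set.range T) := by
        rw [hU, hT, ← range_starProjection_comp_starProjection, LinearMap.coe_range, coe_coe]
    _ ↔ IsClosed (Set.range (adjoint T ∘L T)) := (isClosed_range_adjoint_comp_self_iff T).symm
    _ ↔ IsClosed ((U.map H₂.starProjection.toLinearMap : Submodule ℂ H) : Set H) := by
        rw [hU, hT, adjoint_comp_self_starProjection_comp_starProjection, ← coe_coe,
          ← LinearMap.coe_range, toLinearMap_comp, LinearMap.range_comp,
          range_starProjection_comp_starProjection]
    _ ↔ IsClosed ((U ⊔ H₂ᗮ : Submodule ℂ H) : Set H) :=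
        (H₂.isClosed_sup_orthogonal_iff_isClosed_map_starProjection U).symm
    _ ↔ IsClosed (Set.range ⇑(1 - H₁.starProjection * H₂.starProjection)) := by
        rw [hU, ← range_one_sub_starProjection_mul_starProjection, LinearMap.coe_range, coe_coe]
end

section
/- Let H be a complex Hilbert space, H₁, …, Hₙ closed subspaces of H, and let Γ be a connected undirected graph on the vertex set {1, …, n} with edge set E(Γ). Then H₁ + … + Hₙ = H if and only if there exists ε > 0 such that for all choices of vectors x_k ∈ H_k⊥ (1 ≤ k ≤ n) one has Σ_{{i,j} ∈ E(Γ)} ‖x_i − x_j‖² ≥ ε Σ_{k=1}^{n} ‖x_k‖². -/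
/-!
If `H₁ + ⋯ + Hₙ = H`, the open mapping theorem gives decompositions `v = ∑ zᵢ`, `zᵢ ∈ Hᵢ`, with
`∑ ‖zᵢ‖² ≤ C ‖v‖²`. Pairing `v` with such a decomposition gives `‖v‖² ≤ C ∑ ‖v - xᵢ‖²` whenever
`xᵢ ∈ Hᵢ⊥`; take `v = xⱼ` and bound each `‖xⱼ - xᵢ‖²` along a path of `Γ` by the Dirichlet energy.
Conversely, for `y ∈ H` the vectors `y - Pₖ y` lie in `Hₖ⊥` and have the same energy as `(Pₖ y)ₖ`,
so the inequality makes `∑ Pₖ` coercive, hence invertible, and its range lies in `H₁ + ⋯ + Hₙ`.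
-/

open Finset

namespace SimpleGraph

variable {V E : Type*} [SeminormedAddCommGroup E] {G : SimpleGraph V}

def edgeNorm (x : V → E) : Sym2 V → ℝ :=
  Sym2.lift ⟨fun i j => ‖x i - x j‖, fun _ _ => norm_sub_rev _ _⟩

def dirichletEnergy (G : SimpleGraph V) [Fintype G.edgeSet] (x : V → E) : ℝ :=
  ∑ e ∈ G.edgeFinset,
    Sym2.lift ⟨fun i j => ‖x i - x j‖ ^ 2, fun i j => congrArg (· ^ 2) (norm_sub_rev (x i) (x j))⟩ e

lemma Walk.norm_sub_le_sum_edgeNorm (x : V → E) {a b : V} (p : G.Walk a b) :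
    ‖x a - x b‖ ≤ (p.edges.map (edgeNorm x)).sum := by
  induction p with
  | nil => simp
  | @cons a c b _ q ih =>
    calc ‖x a - x b‖ ≤ ‖x a - x c‖ + ‖x c - x b‖ := norm_sub_le_norm_sub_add_norm_sub _ _ _
      _ ≤ _ := by simpa [edgeNorm] using ih

variable [Fintype G.edgeSet]

lemma dirichletEnergy_eq_sum_edgeNorm_sq (x : V → E) :
    G.dirichletEnergy x = ∑ e ∈ G.edgeFinset, edgeNorm x e ^ 2 :=
  sum_congr rfl fun e _ => by induction e using Sym2.ind with | _ i j => rfl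

lemma dirichletEnergy_const_sub (y : E) (x : V → E) :
    G.dirichletEnergy (fun k => y - x k) = G.dirichletEnergy x :=
  sum_congr rfl fun e _ => by
    induction e using Sym2.ind with
    | _ i j => simp only [Sym2.lift_mk, sub_sub_sub_cancel_left, norm_sub_rev]

lemma dirichletEnergy_le_mul_sum_norm_sq [Fintype V] (x : V → E) :
    G.dirichletEnergy x ≤ 4 * #G.edgeFinset * ∑ k, ‖x k‖ ^ 2 := by
  have hedge : ∀ i j, ‖x i - x j‖ ^ 2 ≤ 4 * ∑ k, ‖x k‖ ^ 2 := fun i j => by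
    have hi := single_le_sum (fun k _ => sq_nonneg ‖x k‖) (mem_univ i)
    have hj := single_le_sum (fun k _ => sq_nonneg ‖x k‖) (mem_univ j)
    nlinarith [pow_le_pow_left₀ (norm_nonneg _) (norm_sub_le (x i) (x j)) 2,
      sq_nonneg (‖x i‖ - ‖x j‖)]
  calc G.dirichletEnergy x ≤ ∑ _e ∈ G.edgeFinset, 4 * ∑ k, ‖x k‖ ^ 2 :=
        sum_le_sum fun e _ => by induction e using Sym2.ind with | _ i j => exact hedge i j
    _ = _ := by rw [sum_const, nsmul_eq_mul, mul_assoc, mul_left_comm]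

lemma Connected.norm_sub_sq_le_card_mul_dirichletEnergy [Fintype V] (hG : G.Connected)
    (x : V → E) (i j : V) :
    ‖x i - x j‖ ^ 2 ≤ Fintype.card V * G.dirichletEnergy x := by
  classical
  obtain ⟨p, hp⟩ := (hG.preconnected i j).some.toPath
  have hnodup := hp.edges_nodup
  have hlen : (#p.edges.toFinset : ℝ) ≤ Fintype.card V := by
    rw [List.toFinset_card_of_nodup hnodup, Walk.length_edges]
    exact_mod_cast hp.length_lt.le
  have hsub : p.edges.toFinset ⊆ G.edgeFinset := fun e he =>
    mem_edgeFinset.mpr (p.edges_subset_edgeSet (List.mem_toFinset.mp he))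
  calc ‖x i - x j‖ ^ 2 ≤ (∑ e ∈ p.edges.toFinset, edgeNorm x e) ^ 2 := by
        rw [List.sum_toFinset _ hnodup]
        exact pow_le_pow_left₀ (norm_nonneg _) (p.norm_sub_le_sum_edgeNorm x) 2
    _ ≤ #p.edges.toFinset * ∑ e ∈ p.edges.toFinset, edgeNorm x e ^ 2 :=
        sq_sum_le_card_mul_sum_sq
    _ ≤ Fintype.card V * ∑ e ∈ G.edgeFinset, edgeNorm x e ^ 2 :=
        mul_le_mul hlen (sum_le_sum_of_subset_of_nonneg hsub fun _ _ _ => sq_nonneg _)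
          (sum_nonneg fun _ _ => sq_nonneg _) (Nat.cast_nonneg _)
    _ = Fintype.card V * G.dirichletEnergy x := by rw [dirichletEnergy_eq_sum_edgeNorm_sq]

end SimpleGraph

namespace Submodule

variable {𝕜 E ι : Type*} [RCLike 𝕜] [NormedAddCommGroup E] [InnerProductSpace 𝕜 E]
  [Fintype ι] {K : ι → Submodule 𝕜 E}

lemma norm_sq_le_mul_sum_norm_sub_sq {C : ℝ} (hC : 0 ≤ C)
    (hK : ∀ v : E, ∃ z : ι → E, (∀ i, z i ∈ K i) ∧ ∑ i, z i = v ∧ ∑ i, ‖z i‖ ^ 2 ≤ C * ‖v‖ ^ 2)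
    {x : ι → E} (hx : ∀ i, x i ∈ (K i)ᗮ) (v : E) :
    ‖v‖ ^ 2 ≤ C * ∑ i, ‖v - x i‖ ^ 2 := by
  obtain ⟨z, hzK, hzv, hz⟩ := hK v
  have hinner : (inner 𝕜 v v : 𝕜) = ∑ i, inner 𝕜 (v - x i) (z i) := by
    nth_rw 2 [← hzv]
    rw [inner_sum]
    refine sum_congr rfl fun i _ => ?_
    rw [inner_sub_left, (mem_orthogonal' _ _).mp (hx i) _ (hzK i), sub_zero]
  have hcs : ‖v‖ ^ 2 ≤ ∑ i, ‖v - x i‖ * ‖z i‖ :=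
    calc ‖v‖ ^ 2 = ‖(inner 𝕜 v v : 𝕜)‖ := by
          rw [inner_self_eq_norm_sq_to_K, norm_pow, RCLike.norm_ofReal, abs_norm]
      _ ≤ ∑ i, ‖v - x i‖ * ‖z i‖ := by
          rw [hinner]
          exact (norm_sum_le _ _).trans (sum_le_sum fun i _ => norm_inner_le_norm _ _)
  have hsq : (‖v‖ ^ 2) ^ 2 ≤ (C * ∑ i, ‖v - x i‖ ^ 2) * ‖v‖ ^ 2 :=
    calc (‖v‖ ^ 2) ^ 2 ≤ (∑ i, ‖v - x i‖ * ‖z i‖) ^ 2 := pow_le_pow_left₀ (by positivity) hcs 2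
      _ ≤ (∑ i, ‖v - x i‖ ^ 2) * ∑ i, ‖z i‖ ^ 2 := sum_mul_sq_le_sq_mul_sq _ _ _
      _ ≤ (∑ i, ‖v - x i‖ ^ 2) * (C * ‖v‖ ^ 2) :=
          mul_le_mul_of_nonneg_left hz (sum_nonneg fun _ _ => sq_nonneg _)
      _ = (C * ∑ i, ‖v - x i‖ ^ 2) * ‖v‖ ^ 2 := by ring
  have hrhs : 0 ≤ C * ∑ i, ‖v - x i‖ ^ 2 := mul_nonneg hC (sum_nonneg fun _ _ => sq_nonneg _)
  nlinarith

variable [CompleteSpace E]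

lemma exists_sum_eq_sum_norm_sq_le_of_iSup_eq_top [∀ i, CompleteSpace (K i)]
    (hK : ⨆ i, K i = ⊤) :
    ∃ C > 0, ∀ v : E, ∃ z : ι → E, (∀ i, z i ∈ K i) ∧ ∑ i, z i = v ∧
      ∑ i, ‖z i‖ ^ 2 ≤ C * ‖v‖ ^ 2 := by
  let T : PiLp 2 (fun i => K i) →L[𝕜] E := ∑ i, (K i).subtypeL.comp (PiLp.proj 2 _ i)
  have hT : ∀ z, T z = ∑ i, (z i : E) := fun z => by simp [T]
  have hsurj : Function.Surjective T := fun v => by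
    have hv : v ∈ ⨆ i ∈ univ, K i := by simp [hK]
    obtain ⟨z, hz⟩ := (mem_iSup_finset_iff_exists_sum K v).mp hv
    exact ⟨WithLp.toLp 2 z, by rw [hT]; exact hz⟩
  obtain ⟨C, hC, hpre⟩ := T.exists_preimage_norm_le hsurj
  refine ⟨C ^ 2, by positivity, fun v => ?_⟩
  obtain ⟨z, rfl, hz⟩ := hpre v
  refine ⟨fun i => z i, fun i => (z i).2, (hT z).symm, ?_⟩
  calc ∑ i, ‖(z i : E)‖ ^ 2 = ‖z‖ ^ 2 := (PiLp.norm_sq_eq_of_L2 _ z).symm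
    _ ≤ (C * ‖T z‖) ^ 2 := pow_le_pow_left₀ (norm_nonneg z) hz 2
    _ = C ^ 2 * ‖T z‖ ^ 2 := mul_pow _ _ _

lemma iSup_eq_top_of_le_sum_norm_sq_starProjection [∀ i, (K i).HasOrthogonalProjection]
    {c : ℝ} (hc : 0 < c)
    (hK : ∀ y : E, c * ‖y‖ ^ 2 ≤ ∑ i, ‖(K i).starProjection y‖ ^ 2) :
    ⨆ i, K i = ⊤ := by
  let A : E →L[𝕜] E := ∑ i, (K i).starProjection
  have hA : IsUnit A := by
    refine A.isUnit_of_forall_le_norm_inner_map (c := ⟨c, hc.le⟩) hc fun y => ?_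
    calc ‖y‖ ^ 2 * c = c * ‖y‖ ^ 2 := mul_comm _ _
      _ ≤ ∑ i, ‖(K i).starProjection y‖ ^ 2 := hK y
      _ = RCLike.re (inner 𝕜 (A y) y) := by
          simp [A, sum_inner, re_inner_starProjection_eq_normSq]
      _ ≤ ‖(inner 𝕜 (A y) y : 𝕜)‖ := RCLike.re_le_norm _
  refine eq_top_iff.mpr fun y _ => ?_
  obtain ⟨w, rfl⟩ := (ContinuousLinearMap.isUnit_iff_bijective.mp hA).surjective y
  simpa [A] using sum_mem fun i _ => mem_iSup_of_mem i ((K i).starProjection_apply_mem w)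

variable (Γ : SimpleGraph ι) [Fintype Γ.edgeSet]

lemma exists_pos_mul_sum_norm_sq_le_dirichletEnergy [∀ i, CompleteSpace (K i)]
    (hK : ⨆ i, K i = ⊤) (hΓ : Γ.Connected) :
    ∃ ε > (0 : ℝ), ∀ x : ι → E, (∀ k, x k ∈ (K k)ᗮ) →
      ε * ∑ k, ‖x k‖ ^ 2 ≤ Γ.dirichletEnergy x := by
  obtain ⟨C, hC, hdecomp⟩ := exists_sum_eq_sum_norm_sq_le_of_iSup_eq_top hK
  have : Nonempty ι := hΓ.nonempty
  set N : ℝ := (Fintype.card ι : ℝ)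
  refine ⟨(C * N ^ 3)⁻¹, by positivity, fun x hx => ?_⟩
  rw [inv_mul_le_iff₀ (by positivity)]
  calc ∑ j, ‖x j‖ ^ 2 ≤ ∑ j, C * ∑ i, ‖x j - x i‖ ^ 2 :=
        sum_le_sum fun j _ => norm_sq_le_mul_sum_norm_sub_sq hC.le hdecomp hx (x j)
    _ ≤ ∑ _j : ι, C * ∑ _i : ι, N * Γ.dirichletEnergy x := by
        gcongr with j _ i _
        exact hΓ.norm_sub_sq_le_card_mul_dirichletEnergy x j i
    _ = C * N ^ 3 * Γ.dirichletEnergy x := by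
        simp only [sum_const, card_univ, nsmul_eq_mul]
        ring

lemma iSup_eq_top_of_mul_sum_norm_sq_le_dirichletEnergy [∀ i, (K i).HasOrthogonalProjection]
    [Nonempty ι] {ε : ℝ} (hε : 0 < ε)
    (h : ∀ x : ι → E, (∀ k, x k ∈ (K k)ᗮ) → ε * ∑ k, ‖x k‖ ^ 2 ≤ Γ.dirichletEnergy x) :
    ⨆ i, K i = ⊤ := by
  set M : ℝ := 4 * #Γ.edgeFinset
  refine iSup_eq_top_of_le_sum_norm_sq_starProjection (c := ε / (ε + M)) (by positivity)
    fun y => ?_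
  set P : ι → E := fun k => (K k).starProjection y
  have hcomplement : ε * ∑ k, ‖y - P k‖ ^ 2 ≤ M * ∑ k, ‖P k‖ ^ 2 :=
    calc ε * ∑ k, ‖y - P k‖ ^ 2 ≤ Γ.dirichletEnergy (fun k => y - P k) :=
          h _ fun k => (K k).sub_starProjection_mem_orthogonal y
      _ = Γ.dirichletEnergy P := SimpleGraph.dirichletEnergy_const_sub y P
      _ ≤ M * ∑ k, ‖P k‖ ^ 2 := SimpleGraph.dirichletEnergy_le_mul_sum_norm_sq P
  obtain ⟨k₀⟩ := ‹Nonempty ι›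
  have hpythagoras : ‖y‖ ^ 2 ≤ ∑ k, ‖P k‖ ^ 2 + ∑ k, ‖y - P k‖ ^ 2 := by
    rw [norm_sq_eq_add_norm_sq_starProjection y (K k₀), starProjection_orthogonal_val]
    exact add_le_add (single_le_sum (fun k _ => sq_nonneg ‖P k‖) (mem_univ k₀))
      (single_le_sum (fun k _ => sq_nonneg ‖y - P k‖) (mem_univ k₀))
  rw [div_mul_eq_mul_div, div_le_iff₀ (by positivity)]
  nlinarith [mul_le_mul_of_nonneg_left hpythagoras hε.le]

end Submodule

/-- Let `Γ` be a connected graph on `{1, …, n}`. Then `H₁ + … + Hₙ = H` iff there is `ε > 0`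
such that for all `x_k ∈ H_k⊥` one has
`Σ_{{i,j} ∈ E(Γ)} ‖x_i − x_j‖² ≥ ε Σ_k ‖x_k‖²`. -/
theorem stmt9 {H : Type*} [NormedAddCommGroup H] [InnerProductSpace ℂ H] [CompleteSpace H]
    {n : ℕ} (H_ : Fin n → Submodule ℂ H) (hcl : ∀ i, IsClosed ((H_ i : Set H)))
    (Γ : SimpleGraph (Fin n)) [DecidableRel Γ.Adj] (hconn : Γ.Connected) :
    (⨆ i, H_ i) = (⊤ : Submodule ℂ H) ↔
      ∃ ε > (0 : ℝ), ∀ x : Fin n → H, (∀ k, x k ∈ (H_ k)ᗮ) →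
        ε * ∑ k, ‖x k‖ ^ 2 ≤
          ∑ e ∈ Γ.edgeFinset,
            Sym2.lift ⟨fun i j => ‖x i - x j‖ ^ 2, fun i j => by show ‖x i - x j‖ ^ 2 = ‖x j - x i‖ ^ 2; rw [norm_sub_rev]⟩ e := by
  have : ∀ i, CompleteSpace (H_ i) := fun i => (hcl i).completeSpace_coe
  have : Nonempty (Fin n) := hconn.nonempty
  refine ⟨fun hsup => Submodule.exists_pos_mul_sum_norm_sq_le_dirichletEnergy Γ hsup hconn, ?_⟩
  rintro ⟨ε, hε, hineq⟩
  exact Submodule.iSup_eq_top_of_mul_sum_norm_sq_le_dirichletEnergy Γ hε hineq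
end

section
/- Let X be a Banach space and X₁, …, Xₙ closed subspaces of X. Then: (1) if there exists ε > 0 such that ‖x₁ + … + xₙ‖ ≥ ε(‖x₁‖ + … + ‖x_{n−1}‖) for all x_j ∈ X_j (1 ≤ j ≤ n), then X₁, …, Xₙ are linearly independent and X₁ + … + Xₙ is closed in X; (2) conversely, if X₁, …, Xₙ are linearly independent and X₁ + … + Xₙ is closed in X, then there exists ε > 0 such that ‖x₁ + … + xₙ‖ ≥ ε(‖x₁‖ + … + ‖xₙ‖) for all x_j ∈ X_j (1 ≤ j ≤ n). -/
/-!
Summing the coordinates is a bounded linear map `T : X₁ × ⋯ × Xₙ → X` with range `X₁ + ⋯ + Xₙ`,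
and linear independence of the `Xⱼ` is injectivity of `T`. Since the sup norm and the `ℓ¹` norm
on the product are equivalent, an estimate `ε (‖x₁‖ + ⋯ + ‖xₙ‖) ≤ ‖x₁ + ⋯ + xₙ‖` says exactly
that `T` is antilipschitz. For an injective operator between Banach spaces this is equivalent,
by the open mapping theorem, to having closed range. In part (1) the missing term `‖xₙ‖` is
recovered from `xₙ = (x₁ + ⋯ + xₙ) - (x₁ + ⋯ + x_{n-1})`.
-/

open Finset

namespace Submodule

section NormedField

variable {𝕜 E ι : Type*} [NormedField 𝕜] [NormedAddCommGroup E] [NormedSpace 𝕜 E] [Fintype ι]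

def sumCLM (p : ι → Submodule 𝕜 E) : (Π i, p i) →L[𝕜] E :=
  ∑ i, (p i).subtypeL.comp (ContinuousLinearMap.proj i)

variable (p : ι → Submodule 𝕜 E)

@[simp]
theorem sumCLM_apply (v : Π i, p i) : sumCLM p v = ∑ i, (v i : E) := by
  simp [sumCLM]

theorem range_sumCLM : Set.range (sumCLM p) = (⨆ i, p i : Submodule 𝕜 E) := by
  classical
  refine Set.Subset.antisymm ?_ fun x hx ↦ ?_
  · rintro _ ⟨v, rfl⟩
    rw [sumCLM_apply]
    exact sum_mem fun i _ ↦ mem_iSup_of_mem i (v i).2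
  · have hle : (⨆ i, p i) ≤ LinearMap.range (sumCLM p : (Π i, p i) →ₗ[𝕜] E) :=
      iSup_le fun i y hy ↦ ⟨Pi.single i ⟨y, hy⟩, by
        rw [ContinuousLinearMap.coe_coe, sumCLM_apply,
          sum_eq_single i (fun j _ hj ↦ by simp [Pi.single_eq_of_ne hj]) (by simp)]
        simp⟩
    exact hle hx

theorem injective_sumCLM_iff : Function.Injective (sumCLM p) ↔
    ∀ x : ι → E, (∀ i, x i ∈ p i) → ∑ i, x i = 0 → ∀ i, x i = 0 := by
  rw [injective_iff_map_eq_zero]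
  constructor
  · intro h x hx hsum i
    exact congrArg Subtype.val (congrFun (h (fun i ↦ ⟨x i, hx i⟩) (by simpa using hsum)) i)
  · intro h v hv
    funext i
    exact Subtype.ext (h (fun i ↦ v i) (fun i ↦ (v i).2) (by simpa using hv) i)

theorem exists_mul_sum_norm_le_iff_antilipschitz :
    (∃ ε > 0, ∀ x : ι → E, (∀ i, x i ∈ p i) → ε * ∑ i, ‖x i‖ ≤ ‖∑ i, x i‖) ↔
      ∃ K, AntilipschitzWith K (sumCLM p) := by
  rw [antilipschitzWith_iff_exists_mul_le_norm]
  constructor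
  · rintro ⟨ε, hε, h⟩
    refine ⟨ε, hε, fun v ↦ ?_⟩
    have hv : ‖v‖ ≤ ∑ i, ‖(v i : E)‖ :=
      (pi_norm_le_iff_of_nonneg (sum_nonneg fun _ _ ↦ norm_nonneg _)).2 fun i ↦
        single_le_sum (f := fun i ↦ ‖(v i : E)‖) (fun _ _ ↦ norm_nonneg _) (mem_univ i)
    calc ε * ‖v‖ ≤ ε * ∑ i, ‖(v i : E)‖ := by gcongr
      _ ≤ ‖sumCLM p v‖ := by simpa using h (fun i ↦ v i) fun i ↦ (v i).2
  · rintro ⟨c, hc, h⟩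
    refine ⟨c / (Fintype.card ι + 1), by positivity, fun x hx ↦ ?_⟩
    let v : Π i, p i := fun i ↦ ⟨x i, hx i⟩
    have hv : ∑ i, ‖x i‖ ≤ Fintype.card ι * ‖v‖ :=
      (Pi.sum_norm_apply_le_norm v).trans_eq (nsmul_eq_mul _ _)
    calc c / (Fintype.card ι + 1) * ∑ i, ‖x i‖ ≤ c * ‖v‖ := by
          rw [div_mul_eq_mul_div, div_le_iff₀ (by positivity)]
          nlinarith [mul_le_mul_of_nonneg_left hv hc.le, norm_nonneg v]
      _ ≤ ‖∑ i, x i‖ := by simpa [v] using h v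

end NormedField

variable {𝕜 E ι : Type*} [NontriviallyNormedField 𝕜] [NormedAddCommGroup E] [NormedSpace 𝕜 E]
  [CompleteSpace E] [Fintype ι]

theorem independent_and_isClosed_iSup_iff_exists_mul_sum_norm_le (p : ι → Submodule 𝕜 E)
    (hp : ∀ i, IsClosed (p i : Set E)) :
    ((∀ x : ι → E, (∀ i, x i ∈ p i) → ∑ i, x i = 0 → ∀ i, x i = 0) ∧
        IsClosed ((⨆ i, p i : Submodule 𝕜 E) : Set E)) ↔
      ∃ ε > 0, ∀ x : ι → E, (∀ i, x i ∈ p i) → ε * ∑ i, ‖x i‖ ≤ ‖∑ i, x i‖ := by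
  have (i : ι) : CompleteSpace (p i) := (hp i).completeSpace_coe
  rw [exists_mul_sum_norm_le_iff_antilipschitz, ← injective_sumCLM_iff, ← range_sumCLM]
  constructor
  · rintro ⟨hinj, hcl⟩
    exact (sumCLM p).antilipschitz_of_injective_of_isClosed_range hinj hcl
  · rintro ⟨K, hK⟩
    exact ⟨hK.injective, hK.isClosed_range (sumCLM p).uniformContinuous⟩

end Submodule

theorem div_add_two_mul_sum_norm_le_of_mul_sum_norm_castSucc_le {E : Type*}
    [SeminormedAddCommGroup E] {n : ℕ} {ε : ℝ} (hε : 0 ≤ ε) (x : Fin (n + 1) → E)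
    (h : ε * ∑ j : Fin n, ‖x j.castSucc‖ ≤ ‖∑ j, x j‖) :
    ε / (ε + 2) * ∑ j, ‖x j‖ ≤ ‖∑ j, x j‖ := by
  have hlast : ‖x (Fin.last n)‖ ≤ ‖∑ j, x j‖ + ∑ j : Fin n, ‖x j.castSucc‖ := by
    have : x (Fin.last n) = ∑ j, x j - ∑ j : Fin n, x j.castSucc := by
      rw [Fin.sum_univ_castSucc]; abel
    rw [this]
    exact (norm_sub_le _ _).trans (by gcongr; exact norm_sum_le _ _)
  rw [Fin.sum_univ_castSucc, div_mul_eq_mul_div, div_le_iff₀ (by positivity)]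
  nlinarith

/-- Criterion for a family of closed subspaces of a Banach space to be linearly independent
with closed sum.  Part (1): if `‖x₁ + … + xₙ‖ ≥ ε(‖x₁‖ + … + ‖x_{n−1}‖)` for some `ε > 0`,
then the subspaces are linearly independent and their sum is closed.
Part (2): conversely, linear independence plus closedness of the sum yields `ε > 0` with
`‖x₁ + … + xₙ‖ ≥ ε(‖x₁‖ + … + ‖xₙ‖)`. -/
theorem stmt11 {X : Type*} [NormedAddCommGroup X] [NormedSpace ℝ X] [CompleteSpace X]
    {n : ℕ} (X_ : Fin (n + 1) → Submodule ℝ X) (hcl : ∀ j, IsClosed ((X_ j : Set X))) :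
    ((∃ ε > (0 : ℝ), ∀ x : Fin (n + 1) → X, (∀ j, x j ∈ X_ j) →
        ε * ∑ j : Fin n, ‖x j.castSucc‖ ≤ ‖∑ j, x j‖) →
      ((∀ x : Fin (n + 1) → X, (∀ j, x j ∈ X_ j) → ∑ j, x j = 0 → ∀ j, x j = 0) ∧
        IsClosed ((⨆ j, X_ j : Submodule ℝ X) : Set X)))
    ∧
    (((∀ x : Fin (n + 1) → X, (∀ j, x j ∈ X_ j) → ∑ j, x j = 0 → ∀ j, x j = 0) ∧
        IsClosed ((⨆ j, X_ j : Submodule ℝ X) : Set X)) →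
      ∃ ε > (0 : ℝ), ∀ x : Fin (n + 1) → X, (∀ j, x j ∈ X_ j) →
        ε * ∑ j, ‖x j‖ ≤ ‖∑ j, x j‖) := by
  have key := Submodule.independent_and_isClosed_iSup_iff_exists_mul_sum_norm_le X_ hcl
  refine ⟨fun ⟨ε, hε, h⟩ ↦ key.2 ⟨ε / (ε + 2), by positivity, fun x hx ↦ ?_⟩, key.1⟩
  exact div_add_two_mul_sum_norm_le_of_mul_sum_norm_castSucc_le hε.le x (h x hx)
end

section
/- Let X be a Banach space and X₁, …, Xₙ linearly independent closed subspaces of X such that X₁ + … + Xₙ is closed in X. Then for every subset S of indices {1, …, n}, the sum Σ_{i ∈ S} X_i is closed in X. -/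
/-!
Summing coordinates is a continuous linear map `σ : ∏ i, Xᵢ → X` from a Banach space. It is
injective by linear independence, and its range `X₁ + ⋯ + Xₙ` is closed, so by the open mapping
theorem it is anti-Lipschitz, hence a closed embedding. The sum `∑_{i ∈ S} Xᵢ` is the image under
`σ` of the closed subspace of families vanishing off `S`, and is therefore closed.
-/

open Function

namespace Submodule

variable {𝕜 E ι : Type*} [NontriviallyNormedField 𝕜] [NormedAddCommGroup E] [NormedSpace 𝕜 E]
  [Fintype ι]

noncomputable def sumFamilyL (p : ι → Submodule 𝕜 E) : (Π i, p i) →L[𝕜] E :=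
  ∑ i, (p i).subtypeL.comp (ContinuousLinearMap.proj i)

@[simp]
theorem sumFamilyL_apply (p : ι → Submodule 𝕜 E) (x : Π i, p i) :
    sumFamilyL p x = ∑ i, (x i : E) := by
  simp [sumFamilyL]

theorem coe_biSup_eq_image_sumFamilyL (p : ι → Submodule 𝕜 E) (S : Finset ι) :
    ((⨆ i ∈ S, p i : Submodule 𝕜 E) : Set E) = sumFamilyL p '' {x | ∀ i ∉ S, x i = 0} := by
  classical
  have sum_eq {x : Π i, p i} (hx : ∀ i ∉ S, x i = 0) : ∑ i, (x i : E) = ∑ i ∈ S, (x i : E) :=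
    (Finset.sum_subset (Finset.subset_univ S) fun i _ hi => by simp [hx i hi]).symm
  ext y
  simp only [SetLike.mem_coe, mem_iSup_finset_iff_exists_sum, Set.mem_image, Set.mem_ofPred_eq,
    sumFamilyL_apply]
  constructor
  · rintro ⟨μ, rfl⟩
    refine ⟨S.piecewise μ 0, fun i hi => by simp [hi], ?_⟩
    rw [sum_eq fun i hi => by simp [hi]]
    exact Finset.sum_congr rfl fun i hi => by simp [hi]
  · rintro ⟨x, hx, rfl⟩
    exact ⟨x, (sum_eq hx).symm⟩

theorem range_sumFamilyL (p : ι → Submodule 𝕜 E) :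
    Set.range (sumFamilyL p) = ((⨆ i, p i : Submodule 𝕜 E) : Set E) := by
  simpa [-sumFamilyL_apply] using (coe_biSup_eq_image_sumFamilyL p Finset.univ).symm

theorem isClosed_biSup_of_isClosed_iSup [CompleteSpace E] (p : ι → Submodule 𝕜 E)
    (hp : ∀ i, IsClosed (p i : Set E)) (hinj : Injective (sumFamilyL p))
    (hsum : IsClosed ((⨆ i, p i : Submodule 𝕜 E) : Set E)) (S : Finset ι) :
    IsClosed ((⨆ i ∈ S, p i : Submodule 𝕜 E) : Set E) := by
  have : ∀ i, CompleteSpace (p i) := fun i => (hp i).completeSpace_coe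
  obtain ⟨K, hK⟩ := (sumFamilyL p).antilipschitz_of_injective_of_isClosed_range hinj
    (by rwa [range_sumFamilyL])
  have hsupported : IsClosed {x : Π i, p i | ∀ i ∉ S, x i = 0} := by
    simp only [Set.ofPred_forall]
    exact isClosed_iInter fun i => isClosed_iInter fun _ =>
      isClosed_eq (continuous_apply i) continuous_const
  rw [coe_biSup_eq_image_sumFamilyL]
  exact (hK.isClosedEmbedding (sumFamilyL p).uniformContinuous).isClosedMap _ hsupported

end Submodule

/-- If `X₁, …, Xₙ` are linearly independent closed subspaces of a Banach space with closed
sum, then the sum over every subset of indices is closed. -/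
theorem stmt12 {X : Type*} [NormedAddCommGroup X] [NormedSpace ℝ X] [CompleteSpace X]
    {n : ℕ} (X_ : Fin n → Submodule ℝ X) (hcl : ∀ j, IsClosed ((X_ j : Set X)))
    (hind : ∀ x : Fin n → X, (∀ j, x j ∈ X_ j) → ∑ j, x j = 0 → ∀ j, x j = 0)
    (hsum : IsClosed ((⨆ j, X_ j : Submodule ℝ X) : Set X)) :
    ∀ S : Finset (Fin n), IsClosed ((⨆ i ∈ S, X_ i : Submodule ℝ X) : Set X) := by
  have hinj : Injective (Submodule.sumFamilyL X_) := by
    refine (injective_iff_map_eq_zero _).mpr fun x hx => funext fun j => Subtype.ext ?_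
    rw [Submodule.sumFamilyL_apply] at hx
    exact hind (fun j => x j) (fun j => (x j).2) hx j
  exact Submodule.isClosed_biSup_of_isClosed_iSup X_ hcl hinj hsum
end

section
/- Let X be a Banach space and X₁, …, Xₙ linearly independent closed subspaces of X such that X₁ + … + Xₙ is closed in X. If Y_k is a closed subspace of X with Y_k ⊆ X_k for each 1 ≤ k ≤ n, then Y₁ + … + Yₙ is closed in X. -/
/-!
The sum map `(x₁, …, xₙ) ↦ x₁ + … + xₙ` from the Banach space `X₁ × ⋯ × Xₙ` to `X` is injective by
linear independence and has the closed range `X₁ + … + Xₙ`, so by the open mapping theorem it is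
a closed embedding. The closed subset `Y₁ × ⋯ × Yₙ` therefore has closed image, and that image is
`Y₁ + … + Yₙ`.
-/

open Function Set Topology

theorem ContinuousLinearMap.isClosedEmbedding_of_injective_of_isClosed_range
    {𝕜 E F : Type*} [NontriviallyNormedField 𝕜]
    [NormedAddCommGroup E] [NormedSpace 𝕜 E] [NormedAddCommGroup F] [NormedSpace 𝕜 F]
    [CompleteSpace E] [CompleteSpace F]
    (f : E →L[𝕜] F) (hf : Injective f) (hf' : IsClosed (range f)) : IsClosedEmbedding f :=
  let ⟨_, hK⟩ := f.antilipschitz_of_injective_of_isClosed_range hf hf'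
  hK.isClosedEmbedding f.uniformContinuous

namespace Submodule

variable {R M ι : Type*} [Fintype ι]

theorem mem_iSup_iff_exists_sum_of_fintype [Semiring R] [AddCommMonoid M] [Module R M]
    (p : ι → Submodule R M) (a : M) :
    a ∈ ⨆ i, p i ↔ ∃ x : ∀ i, p i, ∑ i, (x i : M) = a := by
  simpa using mem_iSup_finset_iff_exists_sum (s := Finset.univ) p a

section SumL

variable [Ring R] [TopologicalSpace M] [AddCommGroup M] [Module R M] [IsTopologicalAddGroup M]

def sumL (p : ι → Submodule R M) : (∀ i, p i) →L[R] M :=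
  ∑ i, (p i).subtypeL.comp (ContinuousLinearMap.proj i)

variable {p q : ι → Submodule R M}

@[simp]
theorem sumL_apply (x : ∀ i, p i) : sumL p x = ∑ i, (x i : M) := by
  simp [sumL]

theorem image_sumL_pi_of_le (hqp : q ≤ p) :
    sumL p '' univ.pi (fun i => ((↑) : p i → M) ⁻¹' q i) = (⨆ i, q i : Submodule R M) := by
  ext a
  simp only [SetLike.mem_coe, mem_iSup_iff_exists_sum_of_fintype q, mem_image, mem_univ_pi,
    mem_preimage, sumL_apply]
  constructor
  · rintro ⟨x, hxq, rfl⟩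
    exact ⟨fun i => ⟨x i, hxq i⟩, rfl⟩
  · rintro ⟨y, rfl⟩
    exact ⟨fun i => ⟨y i, hqp i (y i).2⟩, fun i => (y i).2, rfl⟩

theorem range_sumL : range (sumL p) = (⨆ i, p i : Submodule R M) := by
  ext a
  simp [mem_iSup_iff_exists_sum_of_fintype]

theorem injective_sumL
    (hind : ∀ x : ι → M, (∀ i, x i ∈ p i) → ∑ i, x i = 0 → ∀ i, x i = 0) :
    Injective (sumL p) := by
  intro x y hxy
  have hsub := hind (fun i => (x i - y i : M)) (fun i => (x i - y i).2)
    (by simpa [Finset.sum_sub_distrib, sub_eq_zero] using hxy)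
  funext i
  exact Subtype.ext (sub_eq_zero.mp (hsub i))

end SumL

end Submodule

/-- If `X₁, …, Xₙ` are linearly independent closed subspaces of a Banach space with closed
sum and `Y_k ⊆ X_k` are closed subspaces, then `Y₁ + … + Yₙ` is closed. -/
theorem stmt13 {X : Type*} [NormedAddCommGroup X] [NormedSpace ℝ X] [CompleteSpace X]
    {n : ℕ} (X_ Y_ : Fin n → Submodule ℝ X)
    (hXcl : ∀ j, IsClosed ((X_ j : Set X)))
    (hind : ∀ x : Fin n → X, (∀ j, x j ∈ X_ j) → ∑ j, x j = 0 → ∀ j, x j = 0)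
    (hsum : IsClosed ((⨆ j, X_ j : Submodule ℝ X) : Set X))
    (hYcl : ∀ k, IsClosed ((Y_ k : Set X))) (hYle : ∀ k, Y_ k ≤ X_ k) :
    IsClosed ((⨆ k, Y_ k : Submodule ℝ X) : Set X) := by
  have : ∀ j, CompleteSpace (X_ j) := fun j => (hXcl j).completeSpace_coe
  have hemb : IsClosedEmbedding (Submodule.sumL X_) :=
    (Submodule.sumL X_).isClosedEmbedding_of_injective_of_isClosed_range
      (Submodule.injective_sumL hind) (by rwa [Submodule.range_sumL])
  rw [← Submodule.image_sumL_pi_of_le hYle]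
  exact hemb.isClosedMap _ (isClosed_set_pi fun j _ => (hYcl j).preimage continuous_subtype_val)
end

section
/- Let H be a complex Hilbert space and H₁, …, Hₙ closed subspaces of H. Then there exist two closed subspaces M₁, M₂ of H such that H₁ + H₂ + … + Hₙ = M₁ + M₂ (equality of linear subspaces of H, where the sums need not be closed). -/
/-!
If every `Hᵢ` is finite dimensional, so is their sum, which is then closed. Otherwise let
`K = Hⱼ` have the largest Hilbert dimension, which is infinite. Then the Hilbert sum
`ℓ²(H₁, …, Hₙ)` embeds isometrically into `K` by some `G`. With `T f = ∑ fᵢ` and `P` the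
orthogonal projection onto `K`, the operator `Φ = G + (1 - P) T` is bounded below because
`G f ⊥ (1 - P) T f`, so its range is closed; and `Φ - T` takes values in `K`, whence
`K + range Φ = K + range T = H₁ + ⋯ + Hₙ`.
-/

open scoped ENNReal NNReal

universe u v

open Cardinal in
theorem Cardinal.nonempty_sigma_embedding_of_forall_mk_le {ι : Type u} [Finite ι]
    {s : ι → Type v} {j : ι} [Infinite (s j)] (h : ∀ i, #(s i) ≤ #(s j)) :
    Nonempty ((Σ i, s i) ↪ s j) := by
  rw [← lift_mk_le', lift_id'.{_, _}, mk_sigma]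
  have hj : ℵ₀ ≤ lift.{u} #(s j) := aleph0_le_lift.mpr (infinite_iff.mp ‹_›)
  calc sum (fun i => #(s i)) ≤ sum (fun _ : ι => #(s j)) := sum_le_sum _ _ h
    _ = lift #ι * lift #(s j) := sum_const _ _
    _ ≤ lift #(s j) * lift #(s j) :=
      mul_le_mul_left ((lift_le_aleph0.mpr mk_le_aleph0).trans hj) _
    _ = lift #(s j) := mul_eq_self hj
    _ = _ := by rw [lift_umax.{v, u}]

theorem Submodule.sup_range_eq_of_forall_sub_mem {R M N : Type*} [Ring R] [AddCommGroup M]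
    [AddCommGroup N] [Module R M] [Module R N]
    (K : Submodule R N) {f g : M →ₗ[R] N} (h : ∀ x, f x - g x ∈ K) :
    K ⊔ LinearMap.range f = K ⊔ LinearMap.range g := by
  have sup_range_le (f g : M →ₗ[R] N) (h : ∀ x, f x - g x ∈ K) :
      K ⊔ LinearMap.range f ≤ K ⊔ LinearMap.range g := by
    refine sup_le le_sup_left ?_
    rintro _ ⟨x, rfl⟩
    rw [← sub_add_cancel (f x) (g x)]
    exact add_mem_sup (h x) (LinearMap.mem_range_self g x)
  refine le_antisymm (sup_range_le f g h) (sup_range_le g f fun x => ?_)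
  rw [← neg_sub]
  exact K.neg_mem (h x)

section lpSum

variable {𝕜 E ι : Type*} [NormedField 𝕜] [NormedAddCommGroup E] [NormedSpace 𝕜 E] [Fintype ι]
  (p : ℝ≥0∞) [Fact (1 ≤ p)] (U : ι → Submodule 𝕜 E)

noncomputable def lp.sumSubtypeL : lp (fun i => U i) p →L[𝕜] E :=
  ∑ i, (U i).subtypeL ∘L lp.evalCLM 𝕜 (fun i => U i) p i

theorem lp.sumSubtypeL_apply (f : lp (fun i => U i) p) :
    lp.sumSubtypeL p U f = ∑ i, (f i : E) := by
  simp [lp.sumSubtypeL, lp.evalCLM]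

theorem lp.range_sumSubtypeL : LinearMap.range (lp.sumSubtypeL p U).toLinearMap = ⨆ i, U i := by
  classical
  refine le_antisymm ?_ (iSup_le fun i x hx => ⟨lp.single p i ⟨x, hx⟩, ?_⟩)
  · rintro _ ⟨f, rfl⟩
    rw [ContinuousLinearMap.coe_coe, lp.sumSubtypeL_apply]
    exact Submodule.sum_mem _ fun i _ => Submodule.mem_iSup_of_mem i (f i).2
  · rw [ContinuousLinearMap.coe_coe, lp.sumSubtypeL_apply, Finset.sum_eq_single i]
    · simp
    · intro k _ hk
      simp [Pi.single_eq_of_ne hk]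
    · simp

end lpSum

section InnerProductSpace

variable {𝕜 E : Type*} [RCLike 𝕜] [NormedAddCommGroup E] [InnerProductSpace 𝕜 E]

theorem Submodule.norm_le_norm_add_of_mem_orthogonal {K : Submodule 𝕜 E} {x y : E} (hx : x ∈ K)
    (hy : y ∈ Kᗮ) : ‖x‖ ≤ ‖x + y‖ := by
  have hpyth := norm_add_sq_eq_norm_sq_add_norm_sq_of_inner_eq_zero x y
    (K.inner_right_of_mem_orthogonal hx hy)
  rw [mul_self_le_mul_self_iff (norm_nonneg _) (norm_nonneg _), hpyth]
  exact le_add_of_nonneg_right (mul_self_nonneg _)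

theorem Submodule.isClosed_range_add_of_mem_orthogonal {W : Type*} [NormedAddCommGroup W]
    [NormedSpace 𝕜 W] [CompleteSpace W] {K : Submodule 𝕜 E} {G T : W →L[𝕜] E}
    (hG : ∀ w, G w ∈ K) (hT : ∀ w, T w ∈ Kᗮ) {c : ℝ≥0} (hc : AntilipschitzWith c G) :
    IsClosed (LinearMap.range (G + T).toLinearMap : Set E) := by
  have hanti : AntilipschitzWith c (G + T) := (G + T).antilipschitz_of_bound fun w =>
    (hc.le_mul_norm (map_zero G) w).trans <| by
      gcongr
      exact K.norm_le_norm_add_of_mem_orthogonal (hG w) (hT w)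
  exact hanti.isClosed_range (G + T).uniformContinuous

theorem HilbertBasis.finiteDimensional {ι : Type*} [Finite ι] (b : HilbertBasis ι 𝕜 E) :
    FiniteDimensional 𝕜 E :=
  have := Fintype.ofFinite ι
  .of_basis b.toOrthonormalBasis.toBasis

theorem Submodule.IsOrtho.topologicalClosure {U V : Submodule 𝕜 E} (h : U ⟂ V) :
    U.topologicalClosure ⟂ V.topologicalClosure := by
  rw [isOrtho_iff_le, orthogonal_closure]
  exact U.topologicalClosure_minimal h.le V.isClosed_orthogonal

theorem Orthonormal.range_linearIsometry_comp_repr_le {ι A : Type*} [NormedAddCommGroup A]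
    [InnerProductSpace 𝕜 A] [CompleteSpace E] (b : HilbertBasis ι 𝕜 A) {v : ι → E}
    (hv : Orthonormal 𝕜 v) :
    LinearMap.range (hv.orthogonalFamily.linearIsometry.comp b.repr.toLinearIsometry).toLinearMap
      ≤ (Submodule.span 𝕜 (Set.range v)).topologicalClosure := by
  rintro _ ⟨x, rfl⟩
  have hx := LinearMap.mem_range_self hv.orthogonalFamily.linearIsometry.toLinearMap (b.repr x)
  rw [hv.orthogonalFamily.range_linearIsometry] at hx
  refine Submodule.topologicalClosure_mono (iSup_le fun i => ?_) hx
  rintro _ ⟨a, rfl⟩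
  exact Submodule.smul_mem _ a (Submodule.subset_span ⟨i, rfl⟩)

theorem Orthonormal.nonempty_linearIsometry_lp {ι : Type*} {s A : ι → Type*}
    [∀ i, NormedAddCommGroup (A i)] [∀ i, InnerProductSpace 𝕜 (A i)] [CompleteSpace E]
    (b : ∀ i, HilbertBasis (s i) 𝕜 (A i)) {v : (Σ i, s i) → E} (hv : Orthonormal 𝕜 v) :
    Nonempty (lp A 2 →ₗᵢ[𝕜] E) := by
  have hv' (i : ι) : Orthonormal 𝕜 (v ∘ Sigma.mk i) := hv.comp _ sigma_mk_injective
  have hfibre_ortho {i i' : ι} (hii' : i ≠ i') :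
      Submodule.span 𝕜 (Set.range (v ∘ Sigma.mk i)) ⟂
        Submodule.span 𝕜 (Set.range (v ∘ Sigma.mk i')) := by
    rw [Submodule.isOrtho_span]
    rintro _ ⟨t, rfl⟩ _ ⟨t', rfl⟩
    exact hv.2 fun h => hii' (congrArg Sigma.fst h)
  have hg : OrthogonalFamily 𝕜 A fun i =>
      (hv' i).orthogonalFamily.linearIsometry.comp (b i).repr.toLinearIsometry :=
    fun i i' hii' x y => (hfibre_ortho hii').topologicalClosure.inner_eq
      ((hv' i).range_linearIsometry_comp_repr_le (b i) (LinearMap.mem_range_self _ x))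
      ((hv' i').range_linearIsometry_comp_repr_le (b i') (LinearMap.mem_range_self _ y))
  exact ⟨hg.linearIsometry⟩

end InnerProductSpace

/-- The sum of `n` closed subspaces of a complex Hilbert space can be represented as the sum
of two closed subspaces: there are closed subspaces `M₁, M₂` with
`H₁ + … + Hₙ = M₁ + M₂` (as linear subspaces, not necessarily closed). -/
theorem stmt19 {H : Type*} [NormedAddCommGroup H] [InnerProductSpace ℂ H] [CompleteSpace H]
    {n : ℕ} (H_ : Fin n → Submodule ℂ H) (hcl : ∀ i, IsClosed ((H_ i : Set H))) :
    ∃ M₁ M₂ : Submodule ℂ H, IsClosed ((M₁ : Set H)) ∧ IsClosed ((M₂ : Set H)) ∧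
      (⨆ i, H_ i) = M₁ ⊔ M₂ := by
  have := fun i => (hcl i).completeSpace_coe
  choose s b _ using fun i => exists_hilbertBasis ℂ (H_ i)
  by_cases hfin : ∀ i, Finite (s i)
  · have := fun i => have := hfin i; (b i).finiteDimensional
    exact ⟨⨆ i, H_ i, ⊥, Submodule.closed_of_finiteDimensional _,
      Submodule.closed_of_finiteDimensional _, (sup_bot_eq _).symm⟩
  obtain ⟨i₀, hi₀⟩ := not_forall.mp hfin
  have : Nonempty (Fin n) := ⟨i₀⟩
  obtain ⟨j, hj⟩ := Finite.exists_max fun i => Cardinal.mk (s i)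
  have : Infinite (s j) := Cardinal.infinite_iff.mpr <|
    (Cardinal.infinite_iff.mp (not_finite_iff_infinite.mp hi₀)).trans (hj i₀)
  obtain ⟨e⟩ := Cardinal.nonempty_sigma_embedding_of_forall_mk_le hj
  obtain ⟨G⟩ := ((b j).orthonormal.comp e e.injective).nonempty_linearIsometry_lp b
  set K := H_ j
  let T := lp.sumSubtypeL 2 H_
  let Φ := (K.subtypeL ∘L G.toContinuousLinearMap) + (T - K.starProjection ∘L T)
  refine ⟨K, LinearMap.range Φ.toLinearMap, hcl j,
    K.isClosed_range_add_of_mem_orthogonal (fun w => (G w).2)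
      (fun w => K.sub_starProjection_mem_orthogonal (T w))
      (K.subtypeₗᵢ.antilipschitz.comp G.antilipschitz), ?_⟩
  have hΦT (w) : Φ w - T w ∈ K := by
    convert K.sub_mem (G w).2 (K.starProjection_apply_mem (T w)) using 1
    simp [Φ]
    abel
  rw [K.sup_range_eq_of_forall_sub_mem hΦT, lp.range_sumSubtypeL]
  exact (sup_eq_right.mpr (le_iSup H_ j)).symm
end
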